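/- Let κ₁ > 0, γ₁ > 0, C > 0 be constants, let Θ ∈ ℝ³ be a constant vector, and let Z₁, Z₂, h : ℝ → ℝ and Ψ, Θ̂ : ℝ → ℝ³ be functions of time such that at every time t: h(t) ≠ 0; Z₁ is differentiable with C·Z₁′(t) = h(t)·(Z₂(t) + ξ(t) − ⟨Ψ(t), Θ⟩), where the virtual control is ξ(t) = −κ₁·Z₁(t)/h(t) + ⟨Ψ(t), Θ̂(t)⟩; and Θ̂ is differentiable with Θ̂′(t) = −γ₁·h(t)·Z₁(t)·Ψ(t). Then the Lyapunov function W₁(t) = (1/2)·C·Z₁(t)² + (1/2)·γ₁⁻¹·‖Θ − Θ̂(t)‖² is differentiable with W₁′(t) = −κ₁·Z₁(t)² + h(t)·Z₁(t)·Z₂(t) for every t. -/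

import Mathlib

/-!
Along the closed loop, `C Z₁' = -κ₁ Z₁ + h Z₂ - h ⟪Ψ, Θ - Θ̂⟫`: the virtual control `ξ` cancels
the known part of the dynamics and leaves only the parameter error `Θ - Θ̂`. The update law
`Θ̂' = -γ₁ h Z₁ Ψ` is chosen so that the derivative of `½ γ₁⁻¹ ‖Θ - Θ̂‖²` is exactly
`h Z₁ ⟪Ψ, Θ - Θ̂⟫`, which cancels that remaining cross term in the derivative of `½ C Z₁²`.
-/

open RealInnerProductSpace

section

variable {E : Type*} [NormedAddCommGroup E] [InnerProductSpace ℝ E]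

theorem HasDerivAt.half_mul_sq {f : ℝ → ℝ} {f' t : ℝ} (hf : HasDerivAt f f' t) (C : ℝ) :
    HasDerivAt (fun s => 1 / 2 * C * f s ^ 2) (f t * (C * f')) t := by
  refine ((hf.pow 2).const_mul (1 / 2 * C)).congr_deriv ?_
  ring

theorem HasDerivAt.half_inv_mul_norm_sub_sq {Θhat : ℝ → E} {Ψ : E} {γ c t : ℝ}
    (hΘhat : HasDerivAt Θhat (-(γ * c) • Ψ) t) (Θ : E) (hγ : γ ≠ 0) :
    HasDerivAt (fun s => 1 / 2 * γ⁻¹ * ‖Θ - Θhat s‖ ^ 2) (c * ⟪Ψ, Θ - Θhat t⟫) t := by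
  have herr : HasDerivAt (fun s => Θ - Θhat s) ((γ * c) • Ψ) t := by
    simpa using hΘhat.const_sub Θ
  refine (herr.norm_sq.const_mul (1 / 2 * γ⁻¹)).congr_deriv ?_
  rw [real_inner_smul_right, real_inner_comm]
  field_simp

end

theorem closed_loop_tracking_dynamics {κ₁ C Z₁ Z₁' Z₂ h ξ ψΘ ψΘhat : ℝ} (hne : h ≠ 0)
    (hξ : ξ = -κ₁ * Z₁ / h + ψΘhat) (hdyn : C * Z₁' = h * (Z₂ + ξ - ψΘ)) :
    C * Z₁' = -κ₁ * Z₁ + h * Z₂ - h * (ψΘ - ψΘhat) := by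
  rw [hdyn, hξ]
  field_simp
  ring

theorem first_step_lyapunov_derivative_general
    (κ₁ γ₁ C : ℝ) (hγ₁ : 0 < γ₁)
    (Θ : EuclideanSpace ℝ (Fin 3))
    (Z₁ Z₂ h : ℝ → ℝ) (Ψ Θhat : ℝ → EuclideanSpace ℝ (Fin 3))
    (ξ : ℝ → ℝ)
    (hξ : ∀ t : ℝ, ξ t = -κ₁ * Z₁ t / h t + (inner ℝ (Ψ t) (Θhat t) : ℝ))
    (hne : ∀ t : ℝ, h t ≠ 0)
    (Z₁' : ℝ → ℝ)
    (hZ₁ : ∀ t : ℝ, HasDerivAt Z₁ (Z₁' t) t)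
    (hdyn : ∀ t : ℝ, C * Z₁' t = h t * (Z₂ t + ξ t - (inner ℝ (Ψ t) Θ : ℝ)))
    (hΘhat : ∀ t : ℝ, HasDerivAt Θhat (-(γ₁ * h t * Z₁ t) • Ψ t) t) :
    ∀ t : ℝ,
      HasDerivAt (fun s : ℝ => (1 / 2) * C * (Z₁ s) ^ 2 + (1 / 2) * γ₁⁻¹ * ‖Θ - Θhat s‖ ^ 2)
        (-κ₁ * (Z₁ t) ^ 2 + h t * Z₁ t * Z₂ t) t := by
  intro t
  have htrack := closed_loop_tracking_dynamics (hne t) (hξ t) (hdyn t)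
  have hupdate : HasDerivAt Θhat (-(γ₁ * (h t * Z₁ t)) • Ψ t) t := by
    simpa only [mul_assoc] using hΘhat t
  have hparam := hupdate.half_inv_mul_norm_sub_sq Θ hγ₁.ne'
  refine (((hZ₁ t).half_mul_sq C).add hparam).congr_deriv ?_
  rw [htrack, inner_sub_right]
  ring

theorem first_step_lyapunov_derivative
    (κ₁ γ₁ C : ℝ) (hκ₁ : 0 < κ₁) (hγ₁ : 0 < γ₁) (hC : 0 < C)
    (Θ : EuclideanSpace ℝ (Fin 3))
    (Z₁ Z₂ h : ℝ → ℝ) (Ψ Θhat : ℝ → EuclideanSpace ℝ (Fin 3))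
    (ξ : ℝ → ℝ)
    (hξ : ∀ t : ℝ, ξ t = -κ₁ * Z₁ t / h t + (inner ℝ (Ψ t) (Θhat t) : ℝ))
    (hne : ∀ t : ℝ, h t ≠ 0)
    (Z₁' : ℝ → ℝ)
    (hZ₁ : ∀ t : ℝ, HasDerivAt Z₁ (Z₁' t) t)
    (hdyn : ∀ t : ℝ, C * Z₁' t = h t * (Z₂ t + ξ t - (inner ℝ (Ψ t) Θ : ℝ)))
    (hΘhat : ∀ t : ℝ, HasDerivAt Θhat (-(γ₁ * h t * Z₁ t) • Ψ t) t) :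
    ∀ t : ℝ,
      HasDerivAt (fun s : ℝ => (1 / 2) * C * (Z₁ s) ^ 2 + (1 / 2) * γ₁⁻¹ * ‖Θ - Θhat s‖ ^ 2)
        (-κ₁ * (Z₁ t) ^ 2 + h t * Z₁ t * Z₂ t) t :=
  first_step_lyapunov_derivative_general κ₁ γ₁ C hγ₁ Θ Z₁ Z₂ h Ψ Θhat ξ hξ hne Z₁' hZ₁ hdyn hΘhat
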